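/- (Sufficiency in the model with heterogeneous sender thresholds and common receiver effects.) Fix β ∈ ℝ^k, covariate vectors x₁₁, x₁₂, x₂₁, x₂₂ ∈ ℝ^k, receiver effects γ₁, γ₂ ∈ ℝ, sender-specific threshold functions λ₁, λ₂ : {1,…,M} → ℝ, and cutoffs m, m' ∈ {1,…,M}. Let D₁₁, D₁₂, D₂₁, D₂₂ be mutually independent random variables valued in {0,1} with P(D_{1s} = 1) = Λ(⟨x_{1s}, β⟩ + γ_s − λ₁(m)) and P(D_{2s} = 1) = Λ(⟨x_{2s}, β⟩ + γ_s − λ₂(m')) for s ∈ {1,2}. Set Z = ((D₁₁ − D₁₂) − (D₂₁ − D₂₂))/2 and r = (x₁₁ − x₁₂) − (x₂₁ − x₂₂). Then P(Z = 1 | Z ∈ {−1, +1}) = Λ(⟨r, β⟩); in particular this conditional probability does not depend on γ₁, γ₂, λ₁, λ₂. -/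

import Mathlib

/-!
Given `Z = ±1`, the four binary outcomes must follow the pattern `(1,0,0,1)` or `(0,1,1,0)`.
By independence each pattern has as probability a product of logistic factors
`Λ(±aᵣₛ)`, with `aᵣₛ = ⟪xᵣₛ, β⟫ + γₛ - λᵣ(mᵣ)`. Since `Λ z = exp z * Λ (-z)`, the odds of the
two patterns are `exp (a₀₀ - a₀₁ - a₁₀ + a₁₁)`, and in this combination the receiver effects
`γₛ` and the sender thresholds `λᵣ(mᵣ)` cancel, leaving `⟪r, β⟫`.
-/

open MeasureTheory ProbabilityTheory
open scoped RealInnerProductSpace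

/-- The standard logistic CDF `Λ(z) = e^z / (1 + e^z)`. -/
noncomputable def logistic (z : ℝ) : ℝ := Real.exp z / (1 + Real.exp z)

lemma logistic_pos (z : ℝ) : 0 < logistic z := by
  unfold logistic; positivity

lemma one_sub_logistic (z : ℝ) : 1 - logistic z = logistic (-z) := by
  unfold logistic
  rw [Real.exp_neg]
  field_simp
  ring

lemma exp_mul_logistic_neg (z : ℝ) : Real.exp z * logistic (-z) = logistic z := by
  unfold logistic
  rw [Real.exp_neg]
  field_simp
  ring

lemma div_add_eq_logistic {p q z : ℝ} (hq : 0 < q) (hpq : p = Real.exp z * q) :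
    p / (p + q) = logistic z := by
  unfold logistic
  subst hpq
  field_simp
  ring

lemma logistic_tetrad (a b c d : ℝ) :
    logistic a * logistic (-b) * logistic (-c) * logistic d /
        (logistic a * logistic (-b) * logistic (-c) * logistic d +
          logistic (-a) * logistic b * logistic c * logistic (-d)) =
      logistic (a - b - c + d) := by
  refine div_add_eq_logistic (by unfold logistic; positivity) ?_
  rw [← exp_mul_logistic_neg a, ← exp_mul_logistic_neg b, ← exp_mul_logistic_neg c,
    ← exp_mul_logistic_neg d, Real.exp_add, Real.exp_sub, Real.exp_sub]
  field_simp

lemma tetrad_eq_one_iff {a b c d : ℝ} (ha : a = 0 ∨ a = 1) (hb : b = 0 ∨ b = 1)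
    (hc : c = 0 ∨ c = 1) (hd : d = 0 ∨ d = 1) :
    ((a - b) - (c - d)) / 2 = 1 ↔ a = 1 ∧ b = 0 ∧ c = 0 ∧ d = 1 := by
  rcases ha with rfl | rfl <;> rcases hb with rfl | rfl <;> rcases hc with rfl | rfl <;>
    rcases hd with rfl | rfl <;> norm_num

lemma tetrad_eq_neg_one_iff {a b c d : ℝ} (ha : a = 0 ∨ a = 1) (hb : b = 0 ∨ b = 1)
    (hc : c = 0 ∨ c = 1) (hd : d = 0 ∨ d = 1) :
    ((a - b) - (c - d)) / 2 = -1 ↔ a = 0 ∧ b = 1 ∧ c = 1 ∧ d = 0 := by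
  rcases ha with rfl | rfl <;> rcases hb with rfl | rfl <;> rcases hc with rfl | rfl <;>
    rcases hd with rfl | rfl <;> norm_num

lemma cond_union_left_eq_div {Ω : Type*} [MeasurableSpace Ω] (P : Measure Ω) {A B : Set Ω}
    (hA : MeasurableSet A) (hB : MeasurableSet B) (hAB : Disjoint A B) :
    P[|A ∪ B] A = P A / (P A + P B) := by
  rw [cond_apply (hA.union hB), Set.union_inter_cancel_left, measure_union hAB hB,
    ENNReal.div_eq_inv_mul]

section BinaryLogit

variable {Ω : Type*} [MeasurableSpace Ω] {P : Measure Ω} [IsProbabilityMeasure P]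

lemma measure_eq_zero_of_logit {Y : Ω → ℝ} {z : ℝ} (hY : Measurable Y)
    (hval : ∀ ω, Y ω = 0 ∨ Y ω = 1) (hprob : P {ω | Y ω = 1} = ENNReal.ofReal (logistic z)) :
    P {ω | Y ω = 0} = ENNReal.ofReal (logistic (-z)) := by
  have hcompl : {ω | Y ω = 0} = {ω | Y ω = 1}ᶜ := by
    ext ω
    rcases hval ω with h | h <;> simp [h]
  have hmeas1 : MeasurableSet {ω | Y ω = 1} := hY (measurableSet_singleton 1)
  rw [hcompl, prob_compl_eq_one_sub hmeas1, hprob,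
    ← one_sub_logistic, ENNReal.ofReal_sub _ (logistic_pos z).le, ENNReal.ofReal_one]

lemma measure_eq_ite_of_logit {Y : Ω → ℝ} {z : ℝ} (hY : Measurable Y)
    (hval : ∀ ω, Y ω = 0 ∨ Y ω = 1) (hprob : P {ω | Y ω = 1} = ENNReal.ofReal (logistic z))
    (e : Prop) [Decidable e] :
    P {ω | Y ω = if e then 1 else 0} = ENNReal.ofReal (logistic (if e then z else -z)) := by
  split_ifs
  · exact hprob
  · exact measure_eq_zero_of_logit hY hval hprob

lemma measure_pattern_of_iIndepFun_logit {ι : Type*} [Fintype ι] {D : ι → Ω → ℝ} {a : ι → ℝ}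
    (hmeas : ∀ i, Measurable (D i)) (hval : ∀ i ω, D i ω = 0 ∨ D i ω = 1)
    (hindep : iIndepFun D P) (hprob : ∀ i, P {ω | D i ω = 1} = ENNReal.ofReal (logistic (a i)))
    (e : ι → Prop) [DecidablePred e] :
    P {ω | ∀ i, D i ω = if e i then 1 else 0} =
      ENNReal.ofReal (∏ i, logistic (if e i then a i else -a i)) := by
  rw [Set.ofPred_forall, hindep.meas_iInter (s := fun i => {ω | D i ω = if e i then 1 else 0})
      fun i => ⟨_, measurableSet_singleton _, rfl⟩,
    ENNReal.ofReal_prod_of_nonneg fun i _ => (logistic_pos _).le]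
  exact Finset.prod_congr rfl fun i _ =>
    measure_eq_ite_of_logit (hmeas i) (hval i) (hprob i) (e i)

end BinaryLogit

section Tetrad

variable {Ω : Type*} {D : Fin 2 → Fin 2 → Ω → ℝ}

noncomputable def tetradStat (D : Fin 2 → Fin 2 → Ω → ℝ) (ω : Ω) : ℝ :=
  ((D 0 0 ω - D 0 1 ω) - (D 1 0 ω - D 1 1 ω)) / 2

lemma setOf_tetradStat_eq_one (hval : ∀ r s ω, D r s ω = 0 ∨ D r s ω = 1) :
    {ω | tetradStat D ω = 1} =
      {ω | ∀ p : Fin 2 × Fin 2, D p.1 p.2 ω = if p.1 = p.2 then 1 else 0} := by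
  ext ω
  simp [tetradStat, tetrad_eq_one_iff (hval 0 0 ω) (hval 0 1 ω) (hval 1 0 ω) (hval 1 1 ω),
    Prod.forall, Fin.forall_fin_two, and_assoc]

lemma setOf_tetradStat_eq_neg_one (hval : ∀ r s ω, D r s ω = 0 ∨ D r s ω = 1) :
    {ω | tetradStat D ω = -1} =
      {ω | ∀ p : Fin 2 × Fin 2, D p.1 p.2 ω = if p.1 ≠ p.2 then 1 else 0} := by
  ext ω
  simp [tetradStat, tetrad_eq_neg_one_iff (hval 0 0 ω) (hval 0 1 ω) (hval 1 0 ω) (hval 1 1 ω),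
    Prod.forall, Fin.forall_fin_two, and_assoc]

variable [MeasurableSpace Ω] {P : Measure Ω} [IsProbabilityMeasure P]

lemma measurable_tetradStat (hmeas : ∀ r s, Measurable (D r s)) :
    Measurable (tetradStat D) := by
  unfold tetradStat
  fun_prop

theorem cond_tetradStat_eq_logistic {a : Fin 2 → Fin 2 → ℝ}
    (hmeas : ∀ r s, Measurable (D r s)) (hval : ∀ r s ω, D r s ω = 0 ∨ D r s ω = 1)
    (hindep : iIndepFun (fun p : Fin 2 × Fin 2 => D p.1 p.2) P)
    (hprob : ∀ r s, P {ω | D r s ω = 1} = ENNReal.ofReal (logistic (a r s))) :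
    P[|{ω | tetradStat D ω = 1 ∨ tetradStat D ω = -1}] {ω | tetradStat D ω = 1} =
      ENNReal.ofReal (logistic (a 0 0 - a 0 1 - a 1 0 + a 1 1)) := by
  have hmeas_one : MeasurableSet {ω | tetradStat D ω = 1} :=
    measurable_tetradStat hmeas (measurableSet_singleton 1)
  have hmeas_neg_one : MeasurableSet {ω | tetradStat D ω = -1} :=
    measurable_tetradStat hmeas (measurableSet_singleton (-1))
  have hdisj : Disjoint {ω | tetradStat D ω = 1} {ω | tetradStat D ω = -1} :=
    Set.disjoint_left.2 fun ω (h1 : tetradStat D ω = 1) (h2 : tetradStat D ω = -1) => by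
      linarith
  have hpattern := measure_pattern_of_iIndepFun_logit (P := P)
    (a := fun p : Fin 2 × Fin 2 => a p.1 p.2) (fun p => hmeas p.1 p.2)
    (fun p => hval p.1 p.2) hindep (fun p => hprob p.1 p.2)
  have hprod_one : ∏ p : Fin 2 × Fin 2, logistic (if p.1 = p.2 then a p.1 p.2 else -a p.1 p.2) =
      logistic (a 0 0) * logistic (-a 0 1) * logistic (-a 1 0) * logistic (a 1 1) := by
    simp [Fintype.prod_prod_type, mul_assoc]
  have hprod_neg_one :
      ∏ p : Fin 2 × Fin 2, logistic (if p.1 ≠ p.2 then a p.1 p.2 else -a p.1 p.2) =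
        logistic (-a 0 0) * logistic (a 0 1) * logistic (a 1 0) * logistic (-a 1 1) := by
    simp [Fintype.prod_prod_type, mul_assoc]
  rw [Set.ofPred_or, cond_union_left_eq_div P hmeas_one hmeas_neg_one hdisj,
    setOf_tetradStat_eq_one hval, setOf_tetradStat_eq_neg_one hval, hpattern, hpattern,
    hprod_one, hprod_neg_one, ← ENNReal.ofReal_add, ← ENNReal.ofReal_div_of_pos, logistic_tetrad]
  all_goals unfold logistic; positivity

end Tetrad

theorem sufficiency_sender_thresholds_common_receiver_general
    {Ω : Type*} [MeasurableSpace Ω] (P : Measure Ω) [IsProbabilityMeasure P]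
    (k M : ℕ)
    (β : EuclideanSpace ℝ (Fin k))
    (x : Fin 2 → Fin 2 → EuclideanSpace ℝ (Fin k))
    (γ : Fin 2 → ℝ)
    (lam : Fin 2 → Fin M → ℝ) (mc : Fin 2 → Fin M)
    (D : Fin 2 → Fin 2 → Ω → ℝ)
    (hmeas : ∀ r s, Measurable (D r s))
    (hval : ∀ r s ω, D r s ω = 0 ∨ D r s ω = 1)
    (hindep : iIndepFun
      (fun p : Fin 2 × Fin 2 => D p.1 p.2) P)
    (hprob : ∀ r s, P {ω | D r s ω = 1}
      = ENNReal.ofReal (logistic (⟪x r s, β⟫ + γ s - lam r (mc r))))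
    (Z : Ω → ℝ)
    (hZ : ∀ ω, Z ω = ((D 0 0 ω - D 0 1 ω) - (D 1 0 ω - D 1 1 ω)) / 2)
    (r : EuclideanSpace ℝ (Fin k))
    (hr : r = (x 0 0 - x 0 1) - (x 1 0 - x 1 1)) :
    P[|{ω | Z ω = 1 ∨ Z ω = -1}] {ω | Z ω = 1}
      = ENNReal.ofReal (logistic ⟪r, β⟫) := by
  obtain rfl : Z = tetradStat D := funext hZ
  rw [cond_tetradStat_eq_logistic hmeas hval hindep hprob, hr]
  congr 2
  simp only [inner_sub_left]
  ring

/-- Sufficiency in the ordered-logit network model with heterogeneous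
sender-specific threshold functions `lam 0, lam 1` and common (category
invariant) receiver effects `γ`: the same cutoff `mc 0` is used for both dyads
of the first sender and the same cutoff `mc 1` for both dyads of the second
sender. -/
theorem sufficiency_sender_thresholds_common_receiver
    {Ω : Type*} [MeasurableSpace Ω] (P : Measure Ω) [IsProbabilityMeasure P]
    (k M : ℕ) (hM : 1 ≤ M)
    (β : EuclideanSpace ℝ (Fin k))
    (x : Fin 2 → Fin 2 → EuclideanSpace ℝ (Fin k))
    (γ : Fin 2 → ℝ)
    (lam : Fin 2 → Fin M → ℝ) (mc : Fin 2 → Fin M)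
    (D : Fin 2 → Fin 2 → Ω → ℝ)
    (hmeas : ∀ r s, Measurable (D r s))
    (hval : ∀ r s ω, D r s ω = 0 ∨ D r s ω = 1)
    (hindep : iIndepFun
      (fun p : Fin 2 × Fin 2 => D p.1 p.2) P)
    (hprob : ∀ r s, P {ω | D r s ω = 1}
      = ENNReal.ofReal (logistic (⟪x r s, β⟫ + γ s - lam r (mc r))))
    (Z : Ω → ℝ)
    (hZ : ∀ ω, Z ω = ((D 0 0 ω - D 0 1 ω) - (D 1 0 ω - D 1 1 ω)) / 2)
    (r : EuclideanSpace ℝ (Fin k))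
    (hr : r = (x 0 0 - x 0 1) - (x 1 0 - x 1 1)) :
    P[|{ω | Z ω = 1 ∨ Z ω = -1}] {ω | Z ω = 1}
      = ENNReal.ofReal (logistic ⟪r, β⟫) :=
  sufficiency_sender_thresholds_common_receiver_general P k M β x γ lam mc D hmeas hval hindep hprob
    Z hZ r hr
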